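/- Let Z₁, Z₂, ... be i.i.d. Uniform(0, v), v > 0. Define the Markov chain u 0 = 0, and u t = Z t + u (t-1) - v * indicator(Z t + u (t-1) ≥ v/2) (no momentum, predictive threshold v/2, reset v). Then for all t, u t ∈ [-v/2, v/2) almost surely and E[u t] = 0. -/

import Mathlib

open MeasureTheory ProbabilityTheory

open intervalIntegral in
private lemma stmt14_aux_icc_id (v : ℝ) (hv : 0 < v) :
    ∫ x in Set.Icc (0:ℝ) v, x = v ^ 2 / 2 := by
  rw [MeasureTheory.integral_Icc_eq_integral_Ioc, ← intervalIntegral.integral_of_le hv.le,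
    integral_id]
  ring


/-- Theorem 1 (no-momentum form): with i.i.d. `Z t ~ Uniform(0, v)` inputs and
the predictive update `u t = Z t + u(t-1) - v·1{Z t + u(t-1) ≥ v/2}`, the
residual satisfies `u t ∈ [-v/2, v/2)` a.s. and `E[u t] = 0` for all `t`. -/
theorem stmt_14 {Ω : Type*} [MeasureSpace Ω] {P : Measure Ω} [IsProbabilityMeasure P]
    (v : ℝ) (hv : 0 < v) (Z : ℕ → Ω → ℝ)
    (hZmeas : ∀ n, Measurable (Z n))
    (hZdist : ∀ n, Measure.map (Z n) P
      = (ENNReal.ofReal (1 / v)) • (volume.restrict (Set.Icc (0 : ℝ) v)))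
    (hindep : iIndepFun Z P)
    (u : ℕ → Ω → ℝ) (h0 : ∀ ω, u 0 ω = 0)
    (hrec : ∀ t : ℕ, 1 ≤ t → ∀ ω, u t ω = Z t ω + u (t - 1) ω
      - v * (if v / 2 ≤ Z t ω + u (t - 1) ω then (1 : ℝ) else 0)) :
    ∀ t : ℕ, (∀ᵐ ω ∂P, u t ω ∈ Set.Ico (-(v / 2)) (v / 2)) ∧
      ∫ ω, u t ω ∂P = 0 := by
  -- Z n ∈ [0, v] a.s.
  have hZae : ∀ n, ∀ᵐ ω ∂P, Z n ω ∈ Set.Icc (0:ℝ) v := by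
    intro n
    have hc : P (Z n ⁻¹' (Set.Icc (0:ℝ) v)ᶜ) = 0 := by
      rw [← Measure.map_apply (hZmeas n) measurableSet_Icc.compl, hZdist n,
        Measure.smul_apply, Measure.restrict_apply measurableSet_Icc.compl]
      simp
    rw [MeasureTheory.ae_iff]
    convert hc using 2
    rfl
  suffices H : ∀ t, (∀ᵐ ω ∂P, u t ω ∈ Set.Ico (-(v/2)) (v/2)) ∧ (∫ ω, u t ω ∂P = 0) ∧
      ∃ F : ((Finset.Icc 1 t : Finset ℕ) → ℝ) → ℝ, Measurable F ∧
        ∀ ω, u t ω = F (fun i => Z i.1 ω) by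
    exact fun t => ⟨(H t).1, (H t).2.1⟩
  intro t
  induction t with
  | zero =>
    refine ⟨ae_of_all _ fun ω => ?_, by simp [h0], fun _ => 0, measurable_const, fun ω => h0 ω⟩
    rw [h0]
    constructor <;> [linarith; linarith]
  | succ t ih =>
    obtain ⟨hae, hint, F, hF, hFu⟩ := ih
    have huteq : u t = fun ω => F (fun i => Z i.1 ω) := funext hFu
    have hmeas_t : Measurable (u t) := by
      rw [huteq]; exact hF.comp (measurable_pi_lambda _ fun i => hZmeas i.1)
    -- recursion at t+1
    have hrec' : ∀ ω, u (t+1) ω = Z (t+1) ω + u t ω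
        - v * (if v/2 ≤ Z (t+1) ω + u t ω then (1:ℝ) else 0) := by
      intro ω; simpa using hrec (t+1) (by omega) ω
    -- measurability of u (t+1) and representation
    have hmem : t + 1 ∈ Finset.Icc 1 (t+1) := by simp
    have hrepr : ∃ F' : ((Finset.Icc 1 (t+1) : Finset ℕ) → ℝ) → ℝ, Measurable F' ∧
        ∀ ω, u (t+1) ω = F' (fun i => Z i.1 ω) := by
      have hsub : ∀ i : (Finset.Icc 1 t : Finset ℕ), i.1 ∈ Finset.Icc 1 (t+1) := by
        intro i
        have := Finset.mem_Icc.mp i.2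
        exact Finset.mem_Icc.mpr ⟨this.1, by omega⟩
      refine ⟨fun x => (x ⟨t+1, hmem⟩ + F (fun i => x ⟨i.1, hsub i⟩))
        - v * (if v/2 ≤ x ⟨t+1, hmem⟩ + F (fun i => x ⟨i.1, hsub i⟩) then (1:ℝ) else 0),
        ?_, ?_⟩
      · have h1 : Measurable fun x : ((Finset.Icc 1 (t+1) : Finset ℕ) → ℝ) =>
            x ⟨t+1, hmem⟩ + F (fun i => x ⟨i.1, hsub i⟩) :=
          (measurable_pi_apply _).add
            (hF.comp (measurable_pi_lambda _ fun i => measurable_pi_apply _))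
        exact h1.sub (measurable_const.mul
          (Measurable.ite (measurableSet_le measurable_const h1) measurable_const
            measurable_const))
      · intro ω
        rw [hrec' ω, hFu ω]
    -- independence of u t and Z (t+1)
    have hdisj : Disjoint (Finset.Icc 1 t) ({t+1} : Finset ℕ) := by
      simp [Finset.disjoint_singleton_right, Finset.mem_Icc]
    have hind : IndepFun (u t) (Z (t+1)) P := by
      have hIF := hindep.indepFun_finset (Finset.Icc 1 t) {t+1} hdisj hZmeas
      have h2 := hIF.comp hF
        (measurable_pi_apply (⟨t+1, by simp⟩ : ({t+1} : Finset ℕ)))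
      rw [huteq]
      exact h2
    -- a.s. bound
    have hae' : ∀ᵐ ω ∂P, u (t+1) ω ∈ Set.Ico (-(v/2)) (v/2) := by
      filter_upwards [hae, hZae (t+1)] with ω h1 h2
      obtain ⟨h1a, h1b⟩ := h1
      obtain ⟨h2a, h2b⟩ := h2
      rw [hrec' ω]
      by_cases hc : v/2 ≤ Z (t+1) ω + u t ω
      · rw [if_pos hc, mul_one]
        exact ⟨by linarith, by linarith⟩
      · rw [if_neg hc, mul_zero, sub_zero]
        push_neg at hc
        exact ⟨by linarith, by linarith⟩
    -- integrability
    have hint_Z : Integrable (Z (t+1)) P := by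
      refine (integrable_const v).mono' (hZmeas (t+1)).aestronglyMeasurable ?_
      filter_upwards [hZae (t+1)] with ω h
      rw [Real.norm_eq_abs, abs_le]
      exact ⟨by linarith [h.1], h.2⟩
    have hint_u : Integrable (u t) P := by
      refine (integrable_const (v/2)).mono' hmeas_t.aestronglyMeasurable ?_
      filter_upwards [hae] with ω h
      rw [Real.norm_eq_abs, abs_le]
      exact ⟨by linarith [h.1], le_of_lt h.2⟩
    have hAmeasΩ : MeasurableSet {ω | v/2 ≤ Z (t+1) ω + u t ω} :=
      measurableSet_le measurable_const ((hZmeas (t+1)).add hmeas_t)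
    have hint_ind : Integrable (fun ω => if v/2 ≤ Z (t+1) ω + u t ω then (1:ℝ) else 0) P := by
      refine (integrable_const (1:ℝ)).mono'
        ((Measurable.ite hAmeasΩ measurable_const measurable_const).aestronglyMeasurable) ?_
      refine ae_of_all _ fun ω => ?_
      by_cases hc : v/2 ≤ Z (t+1) ω + u t ω <;> simp [hc]
    -- mean of Z
    have hEZ : ∫ ω, Z (t+1) ω ∂P = v / 2 := by
      have h1 : ∫ ω, Z (t+1) ω ∂P = ∫ x, x ∂(Measure.map (Z (t+1)) P) :=
        (integral_map (hZmeas (t+1)).aemeasurable aestronglyMeasurable_id).symm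
      rw [h1, hZdist (t+1), integral_smul_measure, stmt14_aux_icc_id v hv,
        ENNReal.toReal_ofReal (by positivity), smul_eq_mul]
      field_simp
    -- law of u t
    set μu := Measure.map (u t) P with hμu
    have hprobu : IsProbabilityMeasure μu := Measure.isProbabilityMeasure_map hmeas_t.aemeasurable
    have haeμu : ∀ᵐ b ∂μu, b ∈ Set.Ico (-(v/2)) (v/2) :=
      (MeasureTheory.ae_map_iff hmeas_t.aemeasurable measurableSet_Ico).mpr hae
    have hint_id : Integrable (fun b => b) μu :=
      (integrable_map_measure aestronglyMeasurable_id hmeas_t.aemeasurable).2 hint_u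
    have hEu : ∫ b, b ∂μu = 0 := by
      have h2 : ∫ b, b ∂(Measure.map (u t) P) = ∫ ω, u t ω ∂P :=
        integral_map hmeas_t.aemeasurable aestronglyMeasurable_id
      rw [hμu, h2, hint]
    -- probability of firing = 1/2
    have hAmeas : MeasurableSet {p : ℝ × ℝ | v/2 ≤ p.1 + p.2} :=
      measurableSet_le measurable_const (measurable_fst.add measurable_snd)
    have hPA : P {ω | v/2 ≤ Z (t+1) ω + u t ω} = ENNReal.ofReal (1/2) := by
      have hpair : Measure.map (fun ω => (u t ω, Z (t+1) ω)) P
          = μu.prod (Measure.map (Z (t+1)) P) :=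
        (indepFun_iff_map_prod_eq_prod_map_map hmeas_t.aemeasurable
          (hZmeas (t+1)).aemeasurable).mp hind
      have h1 : P {ω | v/2 ≤ Z (t+1) ω + u t ω}
          = (μu.prod (Measure.map (Z (t+1)) P)) {p : ℝ × ℝ | v/2 ≤ p.1 + p.2} := by
        rw [← hpair, Measure.map_apply (hmeas_t.prodMk (hZmeas (t+1))) hAmeas]
        congr 1
        ext ω
        simp [add_comm]
      rw [h1, Measure.prod_apply hAmeas]
      have hfe : ∀ᵐ b ∂μu, (Measure.map (Z (t+1)) P)
          (Prod.mk b ⁻¹' {p : ℝ × ℝ | v/2 ≤ p.1 + p.2}) = ENNReal.ofReal (1/2 + b/v) := by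
        filter_upwards [haeμu] with b hb
        obtain ⟨hb1, hb2⟩ := hb
        have hset : Prod.mk b ⁻¹' {p : ℝ × ℝ | v/2 ≤ p.1 + p.2} = Set.Ici (v/2 - b) := by
          ext a
          simp only [Set.mem_preimage, Set.mem_setOf_eq, Set.mem_Ici]
          constructor <;> intro <;> linarith
        have hsect : Set.Ici (v/2 - b) ∩ Set.Icc (0:ℝ) v = Set.Icc (v/2 - b) v := by
          ext a
          simp only [Set.mem_inter_iff, Set.mem_Ici, Set.mem_Icc]
          constructor
          · rintro ⟨h1, h2, h3⟩; exact ⟨h1, h3⟩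
          · rintro ⟨h1, h2⟩; exact ⟨h1, by linarith, h2⟩
        rw [hset, hZdist (t+1), Measure.smul_apply,
          Measure.restrict_apply measurableSet_Ici, hsect, Real.volume_Icc, smul_eq_mul,
          ← ENNReal.ofReal_mul (by positivity)]
        congr 1
        field_simp
        ring
      rw [lintegral_congr_ae hfe]
      have hfint : Integrable (fun b => 1/2 + b/v) μu :=
        (integrable_const _).add (hint_id.div_const v)
      have hfnn : 0 ≤ᵐ[μu] fun b => 1/2 + b/v := by
        filter_upwards [haeμu] with b hb
        have : -(v/2) ≤ b := hb.1
        have : -(1/2 : ℝ) ≤ b / v := by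
          rw [le_div_iff₀ hv]
          linarith
        simp only [Pi.zero_apply]
        linarith
      rw [← ofReal_integral_eq_lintegral_ofReal hfint hfnn]
      congr 1
      rw [integral_add (integrable_const _) (hint_id.div_const v), integral_const,
        integral_div, hEu]
      simp
    -- E[indicator] = 1/2
    have hEind : ∫ ω, (if v/2 ≤ Z (t+1) ω + u t ω then (1:ℝ) else 0) ∂P = 1/2 := by
      have : (fun ω => if v/2 ≤ Z (t+1) ω + u t ω then (1:ℝ) else 0)
          = Set.indicator {ω | v/2 ≤ Z (t+1) ω + u t ω} (fun _ => (1:ℝ)) := by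
        funext ω
        rw [Set.indicator_apply]
        simp [Set.mem_setOf_eq]
      rw [this, integral_indicator_const (1:ℝ) hAmeasΩ, measureReal_def, hPA, smul_eq_mul, mul_one,
        ENNReal.toReal_ofReal (by norm_num)]
    -- assemble
    have hsplit : ∫ ω, u (t+1) ω ∂P = (∫ ω, Z (t+1) ω ∂P) + (∫ ω, u t ω ∂P)
        - v * ∫ ω, (if v/2 ≤ Z (t+1) ω + u t ω then (1:ℝ) else 0) ∂P := by
      have : (fun ω => u (t+1) ω) = fun ω => (Z (t+1) ω + u t ω)
          - v * (if v/2 ≤ Z (t+1) ω + u t ω then (1:ℝ) else 0) := funext hrec'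
      have hIadd : Integrable (fun ω => Z (t+1) ω + u t ω) P := hint_Z.add hint_u
      rw [this, integral_sub hIadd (hint_ind.const_mul v),
        integral_add hint_Z hint_u, integral_const_mul]
    refine ⟨hae', ?_, hrepr⟩
    rw [hsplit, hEZ, hint, hEind]
    ring
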